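/- Let G be a connected graph, s and t distinct nonadjacent vertices lying in the same independent module U of a neighborhood decomposition of G (so N_G(s) = N_G(t)). Then d_G(s,t) = |N_G(s) ∩ N_G(t)| = λ_G(s,t); in particular, Facilitator wins the rendezvous game in one step against Divider with k agents if and only if k < |N_G(s)|. -/

import Mathlib

namespace Rendezvous

variable {V : Type*}

/-- One agent's move: stay put or move along an edge. -/
def Step (G : SimpleGraph V) (a b : V) : Prop := a = b ∨ G.Adj a b

/-- Adjacency of multisets of agent positions: there is a bijective pairing such
that every agent stays put or moves along an edge. -/
def MAdj (G : SimpleGraph V) (D D' : Multiset V) : Prop := Multiset.Rel (Step G) D D'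

/-- `FWin G n a b D`: with Facilitator's agents on `a`, `b`, Divider's agents on the
multiset `D`, and Facilitator to move, Facilitator can force his two agents to meet
within at most `n` moves, whatever Divider does. -/
def FWin (G : SimpleGraph V) : ℕ → V → V → Multiset V → Prop
  | 0, a, b, _ => a = b
  | n + 1, a, b, D => a = b ∨ ∃ a' b', Step G a a' ∧ Step G b b' ∧ a' ∉ D ∧ b' ∉ D ∧
      (a' = b' ∨ ∀ D', MAdj G D D' → a' ∉ D' → b' ∉ D' → FWin G n a' b' D')

/-- Divider with `k` agents has a winning strategy in the rendezvous game on `G`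
starting from `s` and `t`: there is an initial placement from which Facilitator can
never force a meeting. -/
def DividerWins (G : SimpleGraph V) (s t : V) (k : ℕ) : Prop :=
  ∃ D : Multiset V, Multiset.card D = k ∧ s ∉ D ∧ t ∉ D ∧ ∀ n, ¬ FWin G n s t D

/-- `d_G(s,t)`: the minimum number of Divider agents sufficient for Divider to win
(`⊤` if no number suffices, e.g. when `s = t` or `s`, `t` are adjacent). -/
noncomputable def dNum (G : SimpleGraph V) (s t : V) : ℕ∞ :=
  sInf {n : ℕ∞ | ∃ k : ℕ, (k : ℕ∞) = n ∧ DividerWins G s t k}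

/-- A vertex `(s,t)`-separator: a set of vertices avoiding `s` and `t` meeting
every walk from `s` to `t`. -/
def IsSeparator (G : SimpleGraph V) (s t : V) (S : Finset V) : Prop :=
  s ∉ S ∧ t ∉ S ∧ ∀ p : G.Walk s t, ∃ v ∈ p.support, v ∈ S

/-- `λ_G(s,t)`: minimum size of a vertex `(s,t)`-separator (`⊤` if none exists). -/
noncomputable def lambdaNum (G : SimpleGraph V) (s t : V) : ℕ∞ :=
  sInf {n : ℕ∞ | ∃ S : Finset V, (S.card : ℕ∞) = n ∧ IsSeparator G s t S}

end Rendezvous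

namespace Rendezvous

/-- `U` is a module of `G`: every vertex outside `U` is adjacent to all of `U`
or to none of `U`. -/
def IsModule {V : Type*} (G : SimpleGraph V) (U : Set V) : Prop :=
  ∀ v ∉ U, (∀ u ∈ U, G.Adj v u) ∨ (∀ u ∈ U, ¬ G.Adj v u)

end Rendezvous

/-!
Since `U` is an independent module, `s` and `t` are non-adjacent twins: `N(s) = N(t) =: N`.
If Divider occupies all of `N` and never moves, Facilitator's agents can never leave `s` and `t`;
with fewer agents some vertex of `N` is free, and both of Facilitator's agents step onto it at
once. Likewise `N` separates `s` from `t`, while every separator contains each common neighbour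
`v`, because of the path `s v t`.
-/

theorem Finset.exists_multiset_card_eq_of_card_le {α : Type*} {S : Finset α}
    (hS : S.Nonempty) {k : ℕ} (hk : S.card ≤ k) :
    ∃ D : Multiset α, Multiset.card D = k ∧ ∀ x, x ∈ D ↔ x ∈ S := by
  obtain ⟨v, hv⟩ := hS
  refine ⟨S.val + Multiset.replicate (k - S.card) v, ?_, fun x => ?_⟩
  · simp only [Multiset.card_add, Finset.card_val, Multiset.card_replicate]
    omega
  simp only [Multiset.mem_add, Finset.mem_val, Multiset.mem_replicate]
  exact ⟨fun h => h.elim id fun h => h.2 ▸ hv, Or.inl⟩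

namespace Rendezvous

open SimpleGraph

variable {V : Type*} {G : SimpleGraph V}

theorem IsModule.neighborSet_eq {U : Set V} (hmod : IsModule G U)
    (hind : U.Pairwise fun a b => ¬ G.Adj a b) {s t : V} (hs : s ∈ U) (ht : t ∈ U) :
    G.neighborSet s = G.neighborSet t := by
  have key : ∀ {a b v}, a ∈ U → b ∈ U → G.Adj a v → G.Adj b v := by
    intro a b v ha hb hav
    have hv : v ∉ U := fun hv => hind ha hv hav.ne hav
    exact (((hmod v hv).resolve_right fun h => h a ha hav.symm) b hb).symm
  ext v
  exact ⟨key hs ht, key ht hs⟩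

theorem step_refl (a : V) : Step G a a := Or.inl rfl

theorem mAdj_refl (D : Multiset V) : MAdj G D D :=
  Multiset.rel_refl_of_refl_on fun a _ => step_refl a

theorem Step.eq_of_notMem {a b : V} {D : Multiset V} (h : Step G a b) (hb : b ∉ D)
    (hD : ∀ v, G.Adj a v → v ∈ D) : a = b :=
  h.resolve_right fun hab => hb (hD b hab)

theorem not_fWin_of_adj_mem {s t : V} {D : Multiset V} (hst : s ≠ t)
    (hs : ∀ v, G.Adj s v → v ∈ D) (ht : ∀ v, G.Adj t v → v ∈ D) :
    ∀ n, ¬ FWin G n s t D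
  | 0 => hst
  | n + 1 => by
    rintro (h | ⟨a, b, hsa, htb, ha, hb, hab⟩)
    · exact hst h
    obtain rfl := hsa.eq_of_notMem ha hs
    obtain rfl := htb.eq_of_notMem hb ht
    -- Divider answers every move by standing still.
    exact hab.elim hst fun hnext => not_fWin_of_adj_mem hst hs ht n (hnext D (mAdj_refl D) ha hb)

theorem dividerWins_card {s t : V} (hst : s ≠ t) (hadj : ¬ G.Adj s t) {D : Multiset V}
    (hD : ∀ v, v ∈ D ↔ G.Adj s v ∨ G.Adj t v) : DividerWins G s t (Multiset.card D) :=
  ⟨D, rfl, by simpa [hD] using fun h => hadj h.symm, by simpa [hD] using hadj,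
    not_fWin_of_adj_mem hst (fun v h => (hD v).2 (Or.inl h)) fun v h => (hD v).2 (Or.inr h)⟩

section LocallyFinite

variable [G.LocallyFinite] {s t : V}

theorem isSeparator_neighborFinset (hst : s ≠ t) (hadj : ¬ G.Adj s t) :
    IsSeparator G s t (G.neighborFinset s) := by
  refine ⟨by simp, by simpa using hadj, fun p => ?_⟩
  cases p with
  | nil => exact absurd rfl hst
  | cons h _ => exact ⟨_, by simp, (mem_neighborFinset ..).2 h⟩

theorem lambdaNum_le_card_neighborFinset (hst : s ≠ t) (hadj : ¬ G.Adj s t) :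
    lambdaNum G s t ≤ (G.neighborFinset s).card :=
  sInf_le ⟨_, rfl, isSeparator_neighborFinset hst hadj⟩

variable [DecidableEq V]

theorem fWin_succ_of_card_lt {D : Multiset V} (n : ℕ)
    (hD : Multiset.card D < (G.neighborFinset s ∩ G.neighborFinset t).card) :
    FWin G (n + 1) s t D := by
  obtain ⟨v, hv, hvD⟩ := Finset.exists_mem_notMem_of_card_lt_card
    (D.toFinset_card_le.trans_lt hD)
  rw [Finset.mem_inter, mem_neighborFinset, mem_neighborFinset] at hv
  have hvD' : v ∉ D := by simpa using hvD
  exact Or.inr ⟨v, v, Or.inr hv.1, Or.inr hv.2, hvD', hvD', Or.inl rfl⟩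

theorem card_inter_le_dNum :
    ((G.neighborFinset s ∩ G.neighborFinset t).card : ℕ∞) ≤ dNum G s t := by
  refine le_sInf ?_
  rintro _ ⟨k, rfl, D, rfl, -, -, hD⟩
  exact_mod_cast not_lt.1 fun hlt => hD 1 (fWin_succ_of_card_lt 0 hlt)

theorem dNum_le_card_union (hst : s ≠ t) (hadj : ¬ G.Adj s t) :
    dNum G s t ≤ ((G.neighborFinset s ∪ G.neighborFinset t).card : ℕ∞) :=
  sInf_le ⟨_, rfl, dividerWins_card (D := (G.neighborFinset s ∪ G.neighborFinset t).val)
    hst hadj (by simp)⟩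

theorem dividerWins_of_card_union_le (hst : s ≠ t) (hadj : ¬ G.Adj s t)
    (hne : (G.neighborFinset s ∪ G.neighborFinset t).Nonempty) {k : ℕ}
    (hk : (G.neighborFinset s ∪ G.neighborFinset t).card ≤ k) : DividerWins G s t k := by
  obtain ⟨D, rfl, hD⟩ := Finset.exists_multiset_card_eq_of_card_le hne hk
  exact dividerWins_card hst hadj fun v => by simpa using hD v

theorem IsSeparator.inter_neighborFinset_subset {S : Finset V} (h : IsSeparator G s t S) :
    G.neighborFinset s ∩ G.neighborFinset t ⊆ S := by
  intro v hv
  rw [Finset.mem_inter, mem_neighborFinset, mem_neighborFinset] at hv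
  obtain ⟨w, hw, hwS⟩ := h.2.2 (.cons hv.1 (.cons hv.2.symm .nil))
  simp only [Walk.support_cons, Walk.support_nil, List.mem_cons,
    List.not_mem_nil, or_false] at hw
  rcases hw with rfl | rfl | rfl
  exacts [absurd hwS h.1, hwS, absurd hwS h.2.1]

theorem card_inter_le_lambdaNum :
    ((G.neighborFinset s ∩ G.neighborFinset t).card : ℕ∞) ≤ lambdaNum G s t := by
  refine le_sInf ?_
  rintro _ ⟨S, rfl, hS⟩
  exact_mod_cast Finset.card_le_card hS.inter_neighborFinset_subset

end LocallyFinite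

end Rendezvous

open Rendezvous

theorem same_independent_module_dNum_general {V : Type*} [Fintype V] [DecidableEq V]
    (G : SimpleGraph V) [DecidableRel G.Adj] (hconn : G.Connected)
    (U : Set V) (hmod : IsModule G U) (hind : U.Pairwise fun a b => ¬ G.Adj a b)
    (s t : V) (hs : s ∈ U) (ht : t ∈ U) (hst : s ≠ t) :
    dNum G s t = ((G.neighborFinset s ∩ G.neighborFinset t).card : ℕ∞) ∧
    lambdaNum G s t = ((G.neighborFinset s ∩ G.neighborFinset t).card : ℕ∞) ∧
    ∀ k : ℕ,
      (∀ D : Multiset V, Multiset.card D = k → s ∉ D → t ∉ D → FWin G 1 s t D) ↔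
        k < (G.neighborFinset s).card := by
  have hadj : ¬ G.Adj s t := hind hs ht hst
  have hN : G.neighborFinset t = G.neighborFinset s := by
    ext v
    simp only [← SimpleGraph.mem_neighborSet, SimpleGraph.mem_neighborFinset,
      hmod.neighborSet_eq hind hs ht]
  have hinter : G.neighborFinset s ∩ G.neighborFinset t = G.neighborFinset s := by
    rw [hN, Finset.inter_self]
  have hunion : G.neighborFinset s ∪ G.neighborFinset t = G.neighborFinset s := by
    rw [hN, Finset.union_self]
  have hne : (G.neighborFinset s).Nonempty := by
    simpa using (hconn.preconnected s t).nonempty_neighborSet_left hst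
  refine ⟨le_antisymm ?_ card_inter_le_dNum, le_antisymm ?_ card_inter_le_lambdaNum,
    fun k => ⟨fun hwin => not_le.1 fun hk => ?_, fun hk D hD _ _ => ?_⟩⟩
  · simpa [hinter, hunion] using dNum_le_card_union hst hadj
  · simpa [hinter] using lambdaNum_le_card_neighborFinset hst hadj
  · obtain ⟨D, hD, hsD, htD, hlose⟩ :=
      dividerWins_of_card_union_le hst hadj (k := k) (by rwa [hunion]) (by rwa [hunion])
    exact hlose 1 (hwin D hD hsD htD)
  · exact fWin_succ_of_card_lt 0 (by rwa [hinter, hD])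

/-- let `G` be connected and `s`, `t` distinct nonadjacent vertices
lying in the same independent module `U` of `G` (so `N_G(s) = N_G(t)`). Then
`d_G(s,t) = |N_G(s) ∩ N_G(t)| = λ_G(s,t)`, and Facilitator wins the rendezvous game
in one step against Divider with `k` agents if and only if `k < |N_G(s)|`. -/
theorem same_independent_module_dNum {V : Type*} [Fintype V] [DecidableEq V]
    (G : SimpleGraph V) [DecidableRel G.Adj] (hconn : G.Connected)
    (U : Set V) (hmod : IsModule G U) (hind : U.Pairwise fun a b => ¬ G.Adj a b)
    (s t : V) (hs : s ∈ U) (ht : t ∈ U) (hst : s ≠ t) (hadj : ¬ G.Adj s t) :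
    dNum G s t = ((G.neighborFinset s ∩ G.neighborFinset t).card : ℕ∞) ∧
    lambdaNum G s t = ((G.neighborFinset s ∩ G.neighborFinset t).card : ℕ∞) ∧
    ∀ k : ℕ,
      (∀ D : Multiset V, Multiset.card D = k → s ∉ D → t ∉ D → FWin G 1 s t D) ↔
        k < (G.neighborFinset s).card :=
  same_independent_module_dNum_general G hconn U hmod hind s t hs ht hst
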